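/- Let M₁, M₂, …, M_m be square nonzero subrectangular nonnegative real matrices, and let T, T₁, T₂, …, T_m be square nonnegative nonzero real matrices, all of the same size. Set R = T₁·M₁·T₂·M₂⋯T_m·M_m. Then for any two nonnegative nonzero vectors x, y such that ‖xᵀ·R·T‖₁ > 0 and ‖yᵀ·R·T‖₁ > 0, one has ln( (‖xᵀ·R·T‖₁ / ‖yᵀ·R·T‖₁) · (‖yᵀ·R‖₁ / ‖xᵀ·R‖₁) ) ≤ 4·ln((1 + τ(M₁))/(1 − τ(M₁))) · ∏_{ℓ=2}^{m} τ(M_ℓ). -/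

import Mathlib

/-!
Write `d(a, b) = log max_{j,l} (a_j b_l) / (a_l b_j)` for Hilbert's projective metric on
nonnegative vectors. Multiplication by a nonnegative matrix does not increase `d`; multiplication by
a nonnegative `A` with `φ(A) > 0` brings any two nonnegative vectors to distance at most
`log φ(A)⁻¹`, and by Birkhoff's contraction theorem it multiplies `d` by at most `τ(A)`. Hence
`d(xᵀR, yᵀR) ≤ log φ(M₁)⁻¹ · ∏_{ℓ ≥ 2} τ(M_ℓ)`, where
`log φ(M₁)⁻¹ = 2 log ((1 + τ(M₁)) / (1 - τ(M₁)))`.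
The quotient in the statement is a ratio of two weighted averages of the coordinate ratios
`(xᵀR)_i / (yᵀR)_i` (weighted by the row sums of `T`, resp. uniformly), hence at most
`exp d(xᵀR, yᵀR)`.

For Birkhoff's theorem, sandwich `m v ≤ u ≤ M v` with `M / m ≤ exp d(u, v)`. The linear form in `u`
whose sign decides a cross ratio of `uᵀA` and `vᵀA` is maximal on that box at a vector equal to
`M v` or `m v` in each coordinate; this reduces the claim to a two-block inequality, and that one to
`t + p ≤ t ^ ((1 - p) / (1 + p)) (1 + t p)` for `t ≥ 1`, where `p = √φ(A)`.
-/

/-- A nonnegative matrix is *subrectangular* if `M i j ≠ 0` and `M k l ≠ 0` imply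
`M i l ≠ 0` and `M k j ≠ 0`. -/
def Subrectangular {m n : Type*} (M : Matrix m n ℝ) : Prop :=
  ∀ i j k l, M i j ≠ 0 → M k l ≠ 0 → M i l ≠ 0 ∧ M k j ≠ 0

/-- `φ(M)`: minimum of `(M i j · M k l)/(M i l · M k j)` over nonzero rows `i, k` and
nonzero columns `j, l` of `M`. -/
noncomputable def phi {m n : Type*} (M : Matrix m n ℝ) : ℝ :=
  sInf {r : ℝ | ∃ i k j l,
    (∃ j', M i j' ≠ 0) ∧ (∃ j', M k j' ≠ 0) ∧ (∃ i', M i' j ≠ 0) ∧ (∃ i', M i' l ≠ 0) ∧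
    r = (M i j * M k l) / (M i l * M k j)}

/-- The Birkhoff contraction coefficient `τ(M) = (1 − √φ(M))/(1 + √φ(M))`. -/
noncomputable def tau {m n : Type*} (M : Matrix m n ℝ) : ℝ :=
  (1 - Real.sqrt (phi M)) / (1 + Real.sqrt (phi M))

/-- The ordered product `R = T₁·M₁·T₂·M₂ ⋯ T_s·M_s`. -/
def prodTM {n : Type*} [Fintype n] [DecidableEq n]
    (T M : ℕ → Matrix n n ℝ) (s : ℕ) : Matrix n n ℝ :=
  ((List.range s).map fun ℓ => T (ℓ + 1) * M (ℓ + 1)).prod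

open Real Matrix

theorem add_le_rpow_mul_one_add_mul {p u : ℝ} (hp : 0 < p) (hp1 : p ≤ 1) (hu : 1 ≤ u) :
    u + p ≤ u ^ ((1 - p) / (1 + p)) * (1 + u * p) := by
  set τ := (1 - p) / (1 + p) with hτ
  set F : ℝ → ℝ := fun t => τ * log t + log (1 + t * p) - log (t + p)
  have hF' : ∀ t, 0 < t → HasDerivAt F (τ * t⁻¹ + p / (1 + t * p) - 1 / (t + p)) t := by
    intro t ht
    have h1 : HasDerivAt (fun s => 1 + s * p) p t := by
      simpa using ((hasDerivAt_id t).mul_const p).const_add 1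
    have h2 : HasDerivAt (fun s => s + p) 1 t := (hasDerivAt_id t).add_const p
    exact (((hasDerivAt_log ht.ne').const_mul τ).add (h1.log (by positivity))).sub
      (by simpa using h2.log (by positivity))
  have hF'_nonneg : ∀ t, 1 < t → 0 ≤ τ * t⁻¹ + p / (1 + t * p) - 1 / (t + p) := by
    intro t ht
    have ht0 : 0 < t := by linarith
    have key : τ * t⁻¹ + p / (1 + t * p) - 1 / (t + p)
        = p * (1 - p) * (t - 1) ^ 2 / ((1 + p) * (t * ((t + p) * (1 + t * p)))) := by
      rw [hτ]
      field_simp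
      ring
    have : 0 ≤ 1 - p := by linarith
    rw [key]
    positivity
  have hmono : MonotoneOn F (Set.Ici 1) := by
    refine monotoneOn_of_hasDerivWithinAt_nonneg (convex_Ici 1)
      (fun t ht => (hF' t (one_pos.trans_le ht)).continuousAt.continuousWithinAt)
      (fun t ht => (hF' t ?_).hasDerivWithinAt) (fun t ht => hF'_nonneg t ?_)
    all_goals rw [interior_Ici] at ht
    exacts [lt_trans one_pos ht, ht]
  have hFu : F 1 ≤ F u := hmono Set.self_mem_Ici hu hu
  have hu0 : 0 < u := by linarith
  rw [← log_le_log_iff (by positivity) (by positivity), log_mul (by positivity) (by positivity),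
    log_rpow hu0]
  simp only [F, log_one, mul_zero, one_mul, zero_add, sub_self] at hFu
  linarith

theorem two_block_contraction_of_eq {p D P Q : ℝ} (hp : 0 < p) (hp1 : p ≤ 1) (hD : 1 ≤ D)
    (hP : 0 ≤ P) (hQ : 0 ≤ Q) :
    (p ^ 2 * P + D * Q) * (P + Q) ≤ D ^ ((1 - p) / (1 + p)) * ((p ^ 2 * P + Q) * (P + D * Q)) := by
  obtain ⟨u, hu, rfl⟩ : ∃ u, 1 ≤ u ∧ D = u ^ 2 :=
    ⟨√D, one_le_sqrt.mpr hD, (sq_sqrt (by linarith)).symm⟩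
  have hK : (u ^ 2) ^ ((1 - p) / (1 + p)) = (u ^ ((1 - p) / (1 + p))) ^ 2 := by
    rw [← rpow_natCast, ← rpow_mul (by positivity), ← rpow_natCast, ← rpow_mul (by positivity),
      mul_comm]
  have hK1 : 1 ≤ (u ^ 2) ^ ((1 - p) / (1 + p)) :=
    one_le_rpow hD (div_nonneg (by linarith) (by linarith))
  have hsq : (u + p) ^ 2 ≤ (u ^ 2) ^ ((1 - p) / (1 + p)) * (1 + u * p) ^ 2 := by
    rw [hK, ← mul_pow]
    exact pow_le_pow_left₀ (by positivity) (add_le_rpow_mul_one_add_mul hp hp1 hu) 2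
  generalize (u ^ 2) ^ ((1 - p) / (1 + p)) = K at hK1 hsq ⊢
  -- the difference of the two sides is `P Q (K (1 + u p)² - (u + p)²) + (K - 1) (u Q - p P)²`
  nlinarith [mul_nonneg (mul_nonneg hP hQ) (sub_nonneg.mpr hsq),
    mul_nonneg (sub_nonneg.mpr hK1) (sq_nonneg (u * Q - p * P))]

theorem two_block_contraction {p D P₁ Q₁ P₂ Q₂ : ℝ} (hp : 0 < p) (hp1 : p ≤ 1) (hD : 1 ≤ D)
    (hP₁ : 0 ≤ P₁) (hQ₁ : 0 ≤ Q₁) (hP₂ : 0 ≤ P₂) (hQ₂ : 0 ≤ Q₂)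
    (h : p ^ 2 * (Q₁ * P₂) ≤ Q₂ * P₁) :
    (P₁ + D * Q₁) * (P₂ + Q₂) ≤ D ^ ((1 - p) / (1 + p)) * ((P₁ + Q₁) * (P₂ + D * Q₂)) := by
  have hdiag := two_block_contraction_of_eq hp hp1 hD hP₂ hQ₂
  have hK : 1 ≤ D ^ ((1 - p) / (1 + p)) := one_le_rpow hD (div_nonneg (by linarith) (by linarith))
  generalize D ^ ((1 - p) / (1 + p)) = K at hK hdiag ⊢
  have hside : P₂ + Q₂ ≤ K * (P₂ + D * Q₂) := by
    nlinarith [mul_nonneg (sub_nonneg.mpr hK) (by positivity : 0 ≤ P₂ + D * Q₂),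
      mul_nonneg (sub_nonneg.mpr hD) hQ₂]
  rcases hQ₂.eq_or_lt with rfl | hQ₂
  · have : Q₁ * P₂ ≤ 0 := nonpos_of_mul_nonpos_right (by simpa using h) (pow_pos hp 2)
    nlinarith [mul_nonneg (mul_nonneg hP₁ hP₂) (sub_nonneg.mpr hK)]
  -- `Q₂ • (P₁, Q₁)` is a nonnegative combination of `(1, 0)` and `(p² P₂, Q₂)`,
  -- and both sides are linear in `(P₁, Q₁)`
  refine le_of_mul_le_mul_left ?_ hQ₂
  nlinarith [mul_nonneg (sub_nonneg.mpr h) (sub_nonneg.mpr hside),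
    mul_nonneg hQ₁ (sub_nonneg.mpr hdiag)]

section Phi

variable {ι κ : Type*} {M : Matrix ι κ ℝ}

theorem phi_set_finite [Finite ι] [Finite κ] (M : Matrix ι κ ℝ) :
    {r : ℝ | ∃ i k j l,
      (∃ j', M i j' ≠ 0) ∧ (∃ j', M k j' ≠ 0) ∧ (∃ i', M i' j ≠ 0) ∧ (∃ i', M i' l ≠ 0) ∧
      r = (M i j * M k l) / (M i l * M k j)}.Finite := by
  refine (Set.finite_range fun q : ι × ι × κ × κ =>
    M q.1 q.2.2.1 * M q.2.1 q.2.2.2 / (M q.1 q.2.2.2 * M q.2.1 q.2.2.1)).subset ?_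
  rintro r ⟨i, k, j, l, -, -, -, -, rfl⟩
  exact ⟨(i, k, j, l), rfl⟩

theorem phi_le_div [Finite ι] [Finite κ] {i k : ι} {j l : κ} (hil : M i l ≠ 0) (hkj : M k j ≠ 0) :
    phi M ≤ M i j * M k l / (M i l * M k j) :=
  csInf_le (phi_set_finite M).bddBelow ⟨i, k, j, l, ⟨l, hil⟩, ⟨j, hkj⟩, ⟨k, hkj⟩, ⟨i, hil⟩, rfl⟩

theorem phi_le_one [Finite ι] [Finite κ] (M : Matrix ι κ ℝ) : phi M ≤ 1 := by
  by_cases h : ∃ i j, M i j ≠ 0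
  · obtain ⟨i, j, hij⟩ := h
    simpa [hij] using phi_le_div (i := i) (k := i) (j := j) (l := j) hij hij
  · push Not at h
    refine (sInf_nonpos ?_).trans zero_le_one
    rintro r ⟨i, k, j, l, -, -, -, -, rfl⟩
    simp [h]

theorem phi_nonneg (hM : ∀ i j, 0 ≤ M i j) : 0 ≤ phi M :=
  sInf_nonneg fun _ ⟨i, k, j, l, _, _, _, _, hr⟩ =>
    hr ▸ div_nonneg (mul_nonneg (hM i j) (hM k l)) (mul_nonneg (hM i l) (hM k j))

theorem phi_pos [Finite ι] [Finite κ] (hM : ∀ i j, 0 ≤ M i j) (hM0 : M ≠ 0)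
    (hMs : Subrectangular M) : 0 < phi M := by
  obtain ⟨i, j, hij⟩ : ∃ i j, M i j ≠ 0 := by
    by_contra! h
    exact hM0 (Matrix.ext h)
  have hne : Set.Nonempty {r : ℝ | ∃ i k j l,
      (∃ j', M i j' ≠ 0) ∧ (∃ j', M k j' ≠ 0) ∧ (∃ i', M i' j ≠ 0) ∧ (∃ i', M i' l ≠ 0) ∧
      r = (M i j * M k l) / (M i l * M k j)} :=
    ⟨_, i, i, j, j, ⟨j, hij⟩, ⟨j, hij⟩, ⟨i, hij⟩, ⟨i, hij⟩, rfl⟩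
  obtain ⟨i, k, j, l, ⟨j₁, h₁⟩, ⟨j₂, h₂⟩, ⟨i₁, h₃⟩, ⟨i₂, h₄⟩, hφ⟩ :=
    hne.csInf_mem (phi_set_finite M)
  have hpos : ∀ {a b}, M a b ≠ 0 → 0 < M a b := fun h => (hM _ _).lt_of_ne' h
  rw [phi, hφ]
  exact div_pos (mul_pos (hpos (hMs i j₁ i₁ j h₁ h₃).1) (hpos (hMs k j₂ i₂ l h₂ h₄).1))
    (mul_pos (hpos (hMs i j₁ i₂ l h₁ h₄).1) (hpos (hMs k j₂ i₁ j h₂ h₃).1))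

theorem phi_mul_le [Finite ι] [Finite κ] (hM : ∀ i j, 0 ≤ M i j) (i k : ι) (j l : κ) :
    phi M * (M i j * M k l) ≤ M i l * M k j := by
  rcases (mul_nonneg (hM i j) (hM k l)).eq_or_lt with h | h
  · rw [← h, mul_zero]
    exact mul_nonneg (hM i l) (hM k j)
  · rw [← le_div_iff₀ h]
    exact phi_le_div (left_ne_zero_of_mul h.ne') (right_ne_zero_of_mul h.ne')

theorem tau_nonneg [Finite ι] [Finite κ] (M : Matrix ι κ ℝ) : 0 ≤ tau M :=
  div_nonneg (by simpa using sqrt_le_one.mpr (phi_le_one M)) (by positivity)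

theorem tau_eq_one_of_phi_eq_zero (h : phi M = 0) : tau M = 1 := by
  simp [tau, h]

theorem log_inv_phi_eq (hφ : 0 < phi M) :
    log (phi M)⁻¹ = 2 * log ((1 + tau M) / (1 - tau M)) := by
  have hs : 0 < √(phi M) := sqrt_pos.mpr hφ
  have : (1 + tau M) / (1 - tau M) = (√(phi M))⁻¹ := by
    rw [tau]
    field_simp
    rw [div_eq_one_iff_eq (by linarith)]
    ring
  rw [this, log_inv, log_inv, log_sqrt hφ.le]
  ring

end Phi

-- Hilbert's projective distance `d(a, b)` is at most `log K`.
def CrossRatioLE {κ : Type*} (K : ℝ) (a b : κ → ℝ) : Prop :=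
  ∀ j l, a j * b l ≤ K * (a l * b j)

theorem CrossRatioLE.mono {κ : Type*} {K K' : ℝ} {a b : κ → ℝ} (h : CrossRatioLE K a b)
    (hK : K ≤ K') (ha : ∀ i, 0 ≤ a i) (hb : ∀ i, 0 ≤ b i) : CrossRatioLE K' a b := fun j l =>
  (h j l).trans (mul_le_mul_of_nonneg_right hK (mul_nonneg (ha l) (hb j)))

section CrossRatio

variable {ι κ : Type*} [Fintype ι] {A : Matrix ι κ ℝ} {K : ℝ} {u v : ι → ℝ}

theorem vecMul_nonneg (hu : ∀ i, 0 ≤ u i) (hA : ∀ i j, 0 ≤ A i j) (j : κ) : 0 ≤ (u ᵥ* A) j :=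
  Finset.sum_nonneg fun i _ => mul_nonneg (hu i) (hA i j)

theorem CrossRatioLE.vecMul (h : CrossRatioLE K u v) (hA : ∀ i j, 0 ≤ A i j) :
    CrossRatioLE K (u ᵥ* A) (v ᵥ* A) := by
  intro j l
  rw [mul_comm ((u ᵥ* A) l)]
  simp only [vecMul_apply_eq_sum]
  rw [Finset.sum_mul_sum, Finset.sum_mul_sum, Finset.mul_sum]
  refine Finset.sum_le_sum fun a _ => ?_
  rw [Finset.mul_sum]
  refine Finset.sum_le_sum fun b _ => ?_
  calc u a * A a j * (v b * A b l) = (A a j * A b l) * (u a * v b) := by ring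
    _ ≤ (A a j * A b l) * (K * (u b * v a)) :=
        mul_le_mul_of_nonneg_left (h a b) (mul_nonneg (hA a j) (hA b l))
    _ = K * (v a * A a j * (u b * A b l)) := by ring

theorem phi_mul_vecMul_le [Fintype κ] (hA : ∀ i j, 0 ≤ A i j) (hu : ∀ i, 0 ≤ u i)
    (hv : ∀ i, 0 ≤ v i) (j l : κ) :
    phi A * ((u ᵥ* A) j * (v ᵥ* A) l) ≤ (u ᵥ* A) l * (v ᵥ* A) j := by
  simp only [vecMul_apply_eq_sum]
  rw [Finset.sum_mul_sum, Finset.sum_mul_sum, Finset.mul_sum]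
  refine Finset.sum_le_sum fun a _ => ?_
  rw [Finset.mul_sum]
  refine Finset.sum_le_sum fun b _ => ?_
  calc phi A * (u a * A a j * (v b * A b l)) = u a * v b * (phi A * (A a j * A b l)) := by ring
    _ ≤ u a * v b * (A a l * A b j) :=
        mul_le_mul_of_nonneg_left (phi_mul_le hA a b j l) (mul_nonneg (hu a) (hv b))
    _ = u a * A a l * (v b * A b j) := by ring

theorem crossRatioLE_inv_phi_vecMul [Fintype κ] (hA : ∀ i j, 0 ≤ A i j) (hφ : 0 < phi A)
    (hu : ∀ i, 0 ≤ u i) (hv : ∀ i, 0 ≤ v i) :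
    CrossRatioLE (phi A)⁻¹ (u ᵥ* A) (v ᵥ* A) := fun j l => by
  rw [← div_eq_inv_mul, le_div_iff₀' hφ]
  exact phi_mul_vecMul_le hA hu hv j l

theorem CrossRatioLE.exists_mul_le_le_mul (h : CrossRatioLE K u v) (hu : ∀ i, 0 ≤ u i)
    (hv : ∀ i, 0 ≤ v i) (hu0 : u ≠ 0) (hv0 : v ≠ 0) :
    ∃ m M, 0 < m ∧ m ≤ M ∧ M ≤ K * m ∧ (∀ i, m * v i ≤ u i) ∧ ∀ i, u i ≤ M * v i := by
  classical
  set S := Finset.univ.filter fun i => 0 < v i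
  have hS : S.Nonempty := by
    obtain ⟨i, hi⟩ := Function.ne_iff.mp hv0
    exact ⟨i, Finset.mem_filter.mpr ⟨Finset.mem_univ i, (hv i).lt_of_ne' hi⟩⟩
  have hmem : ∀ {i}, i ∈ S ↔ 0 < v i := by simp [S]
  obtain ⟨a, ha, hmin⟩ := S.exists_min_image (fun i => u i / v i) hS
  obtain ⟨b, hb, hmax⟩ := S.exists_max_image (fun i => u i / v i) hS
  rw [hmem] at ha hb
  have hvanish : ∀ i, u a = 0 ∨ v i = 0 → u i = 0 := by
    intro i hi
    have : u i * v a ≤ 0 := by rcases hi with h0 | h0 <;> simpa [h0] using h i a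
    exact le_antisymm (nonpos_of_mul_nonpos_left this ha) (hu i)
  have hua : 0 < u a := (hu a).lt_of_ne' fun h0 => hu0 (funext fun i => hvanish i (.inl h0))
  refine ⟨u a / v a, u b / v b, by positivity, hmin b (hmem.mpr hb), ?_, fun i => ?_, fun i => ?_⟩
  · rw [div_le_iff₀ hb, mul_div_assoc', div_mul_eq_mul_div, le_div_iff₀ ha]
    linarith [h b a]
  · rcases (hv i).eq_or_lt with h0 | h0
    · simpa [← h0] using hu i
    · exact (le_div_iff₀' h0).mp (hmin i (hmem.mpr h0)) |>.trans_eq' (by ring)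
  · rcases (hv i).eq_or_lt with h0 | h0
    · simp [hvanish i (.inr h0.symm), ← h0]
    · exact (div_le_iff₀' h0).mp (hmax i (hmem.mpr h0)) |>.trans_eq (by ring)

theorem crossRatioLE_div_rpow_tau_vecMul [Fintype κ] (hA : ∀ i j, 0 ≤ A i j) (hφ : 0 < phi A)
    (hv : ∀ i, 0 ≤ v i) {m M : ℝ} (hm : 0 < m) (hmM : m ≤ M) (hlow : ∀ i, m * v i ≤ u i)
    (hhigh : ∀ i, u i ≤ M * v i) : CrossRatioLE ((M / m) ^ tau A) (u ᵥ* A) (v ᵥ* A) := by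
  obtain ⟨D, hD, rfl⟩ : ∃ D, 1 ≤ D ∧ M = m * D :=
    ⟨M / m, (one_le_div hm).mpr hmM, by field_simp⟩
  rw [mul_div_cancel_left₀ D hm.ne']
  intro j l
  set c : ι → ℝ := fun i => A i j * (v ᵥ* A) l - D ^ tau A * (A i l * (v ᵥ* A) j)
  have hc : ∀ w : ι → ℝ,
      (w ᵥ* A) j * (v ᵥ* A) l - D ^ tau A * ((w ᵥ* A) l * (v ᵥ* A) j) = ∑ i, w i * c i := by
    intro w
    simp only [c, mul_sub, Finset.sum_sub_distrib, vecMul_apply_eq_sum w, Finset.sum_mul,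
      Finset.mul_sum]
    congr 1 <;> exact Finset.sum_congr rfl fun i _ => by ring
  -- the linear form `Σ w c` is maximized over the box `m v ≤ w ≤ m D v` at `w = m D v₁ + m v₂`
  set v₁ : ι → ℝ := fun i => if 0 ≤ c i then v i else 0
  set v₂ : ι → ℝ := fun i => if 0 ≤ c i then 0 else v i
  have hv₁ : ∀ i, 0 ≤ v₁ i := fun i => by simp only [v₁]; split_ifs <;> simp [hv i]
  have hv₂ : ∀ i, 0 ≤ v₂ i := fun i => by simp only [v₂]; split_ifs <;> simp [hv i]
  have hvsplit : v ᵥ* A = v₁ ᵥ* A + v₂ ᵥ* A := by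
    rw [← add_vecMul]
    congr 1
    ext i
    simp only [v₁, v₂, Pi.add_apply]
    split_ifs <;> simp
  have hextreme : ∑ i, u i * c i ≤ ∑ i, ((m * D) • v₁ + m • v₂) i * c i :=
    Finset.sum_le_sum fun i _ => by
      simp only [v₁, v₂, Pi.add_apply, Pi.smul_apply, smul_eq_mul]
      split_ifs with h
      · simpa using mul_le_mul_of_nonneg_right (hhigh i) h
      · simpa using mul_le_mul_of_nonpos_right (hlow i) (not_le.mp h).le
  have hblock := two_block_contraction (sqrt_pos.mpr hφ) (sqrt_le_one.mpr (phi_le_one A)) hD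
    (vecMul_nonneg hv₂ hA j) (vecMul_nonneg hv₁ hA j) (vecMul_nonneg hv₂ hA l)
    (vecMul_nonneg hv₁ hA l) (by simpa [sq_sqrt hφ.le] using phi_mul_vecMul_le hA hv₁ hv₂ j l)
  rw [← sub_nonpos, hc]
  refine hextreme.trans ?_
  rw [← hc, add_vecMul, smul_vecMul, smul_vecMul, hvsplit]
  simp only [Pi.add_apply, Pi.smul_apply, smul_eq_mul]
  rw [← tau] at hblock
  nlinarith [mul_le_mul_of_nonneg_left hblock hm.le]

theorem CrossRatioLE.rpow_tau_vecMul [Fintype κ] (h : CrossRatioLE K u v) (hA : ∀ i j, 0 ≤ A i j)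
    (hu : ∀ i, 0 ≤ u i) (hv : ∀ i, 0 ≤ v i) : CrossRatioLE (K ^ tau A) (u ᵥ* A) (v ᵥ* A) := by
  rcases (phi_nonneg hA).eq_or_lt with hφ | hφ
  · rw [tau_eq_one_of_phi_eq_zero hφ.symm, rpow_one]
    exact h.vecMul hA
  rcases eq_or_ne u 0 with rfl | hu0
  · simp [CrossRatioLE]
  rcases eq_or_ne v 0 with rfl | hv0
  · simp [CrossRatioLE]
  obtain ⟨m, M, hm, hmM, hMK, hlow, hhigh⟩ := h.exists_mul_le_le_mul hu hv hu0 hv0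
  refine (crossRatioLE_div_rpow_tau_vecMul hA hφ hv hm hmM hlow hhigh).mono ?_
    (vecMul_nonneg hu hA) (vecMul_nonneg hv hA)
  exact rpow_le_rpow (div_nonneg (hm.le.trans hmM) hm.le) ((div_le_iff₀ hm).mpr hMK) (tau_nonneg A)

theorem sum_pos_of_sum_vecMul_pos [Fintype κ] (hu : ∀ i, 0 ≤ u i) (h : 0 < ∑ j, (u ᵥ* A) j) :
    0 < ∑ i, u i := by
  refine (Finset.sum_nonneg fun i _ => hu i).lt_of_ne fun h0 => h.ne' ?_
  have : u = 0 := funext fun i =>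
    (Finset.sum_eq_zero_iff_of_nonneg fun i _ => hu i).mp h0.symm i (Finset.mem_univ i)
  simp [this]

theorem CrossRatioLE.sum_vecMul_div_mul_sum_div_le [Fintype κ] (h : CrossRatioLE K u v)
    (hA : ∀ i j, 0 ≤ A i j) (hu : ∀ i, 0 ≤ u i) (huA : 0 < ∑ j, (u ᵥ* A) j)
    (hvA : 0 < ∑ j, (v ᵥ* A) j) :
    (∑ j, (u ᵥ* A) j) / (∑ j, (v ᵥ* A) j) * ((∑ i, v i) / ∑ i, u i) ≤ K := by
  rw [div_mul_div_comm, div_le_iff₀ (mul_pos hvA (sum_pos_of_sum_vecMul_pos hu huA))]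
  set r : ι → ℝ := fun i => ∑ j, A i j
  have hrows : ∀ w : ι → ℝ, ∑ j, (w ᵥ* A) j = ∑ i, w i * r i := fun w => by
    simp only [r, vecMul_apply_eq_sum, Finset.mul_sum]
    exact Finset.sum_comm
  have hr : ∀ i, 0 ≤ r i := fun i => Finset.sum_nonneg fun j _ => hA i j
  clear_value r
  rw [hrows, hrows, Finset.sum_mul_sum, Finset.sum_mul_sum, Finset.mul_sum]
  refine Finset.sum_le_sum fun i _ => ?_
  rw [Finset.mul_sum]
  refine Finset.sum_le_sum fun k _ => ?_
  calc u i * r i * v k = r i * (u i * v k) := by ring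
    _ ≤ r i * (K * (u k * v i)) := mul_le_mul_of_nonneg_left (h i k) (hr i)
    _ = K * (v i * r i * u k) := by ring

end CrossRatio

section ProdTM

variable {n : Type*} [Fintype n] [DecidableEq n] {T M : ℕ → Matrix n n ℝ} {u v : n → ℝ}

theorem prodTM_succ (T M : ℕ → Matrix n n ℝ) (s : ℕ) :
    prodTM T M (s + 1) = prodTM T M s * (T (s + 1) * M (s + 1)) := by
  simp [prodTM, List.range_succ]

theorem vecMul_prodTM_succ (u : n → ℝ) (s : ℕ) :
    u ᵥ* prodTM T M (s + 1) = u ᵥ* prodTM T M s ᵥ* T (s + 1) ᵥ* M (s + 1) := by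
  rw [prodTM_succ, vecMul_vecMul, vecMul_vecMul]

theorem vecMul_prodTM_nonneg (hu : ∀ i, 0 ≤ u i) {s : ℕ}
    (hT : ∀ ℓ, 1 ≤ ℓ → ℓ ≤ s → ∀ i j, 0 ≤ T ℓ i j) (hM : ∀ ℓ, 1 ≤ ℓ → ℓ ≤ s → ∀ i j, 0 ≤ M ℓ i j) :
    ∀ j, 0 ≤ (u ᵥ* prodTM T M s) j := by
  induction s with
  | zero => simpa [prodTM] using hu
  | succ s ih =>
    rw [vecMul_prodTM_succ]
    exact vecMul_nonneg (vecMul_nonneg (ih (fun ℓ h₁ h₂ => hT ℓ h₁ (by omega))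
      (fun ℓ h₁ h₂ => hM ℓ h₁ (by omega))) (hT _ (by omega) le_rfl)) (hM _ (by omega) le_rfl)

theorem crossRatioLE_vecMul_prodTM (hu : ∀ i, 0 ≤ u i) (hv : ∀ i, 0 ≤ v i) {s : ℕ} (hs : 1 ≤ s)
    (hT : ∀ ℓ, 1 ≤ ℓ → ℓ ≤ s → ∀ i j, 0 ≤ T ℓ i j) (hM : ∀ ℓ, 1 ≤ ℓ → ℓ ≤ s → ∀ i j, 0 ≤ M ℓ i j)
    (hφ : 0 < phi (M 1)) :
    CrossRatioLE ((phi (M 1))⁻¹ ^ ∏ ℓ ∈ Finset.Icc 2 s, tau (M ℓ))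
      (u ᵥ* prodTM T M s) (v ᵥ* prodTM T M s) := by
  induction s, hs using Nat.le_induction with
  | base =>
    have h1 : ∀ w : n → ℝ, w ᵥ* prodTM T M 1 = w ᵥ* T 1 ᵥ* M 1 := fun w => by
      simp [prodTM, vecMul_vecMul]
    rw [h1, h1, Finset.Icc_eq_empty (by norm_num), Finset.prod_empty, rpow_one]
    exact crossRatioLE_inv_phi_vecMul (hM 1 le_rfl le_rfl) hφ
      (vecMul_nonneg hu (hT 1 le_rfl le_rfl)) (vecMul_nonneg hv (hT 1 le_rfl le_rfl))
  | succ s hs ih =>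
    have hT' := hT (s + 1) (by omega) le_rfl
    have hM' := hM (s + 1) (by omega) le_rfl
    replace hT : ∀ ℓ, 1 ≤ ℓ → ℓ ≤ s → ∀ i j, 0 ≤ T ℓ i j := fun ℓ h₁ h₂ => hT ℓ h₁ (by omega)
    replace hM : ∀ ℓ, 1 ≤ ℓ → ℓ ≤ s → ∀ i j, 0 ≤ M ℓ i j := fun ℓ h₁ h₂ => hM ℓ h₁ (by omega)
    rw [vecMul_prodTM_succ, vecMul_prodTM_succ, Finset.prod_Icc_succ_top (by omega),
      rpow_mul (inv_nonneg.mpr hφ.le)]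
    exact ((ih hT hM).vecMul hT').rpow_tau_vecMul hM'
      (vecMul_nonneg (vecMul_prodTM_nonneg hu hT hM) hT')
      (vecMul_nonneg (vecMul_prodTM_nonneg hv hT hM) hT')

end ProdTM

theorem stmt_12_general {n : Type*} [Fintype n] [DecidableEq n]
    (m : ℕ) (hm : 1 ≤ m)
    (M T' : ℕ → Matrix n n ℝ) (T : Matrix n n ℝ)
    (hMpos : ∀ ℓ, 1 ≤ ℓ → ℓ ≤ m → ∀ i j, 0 ≤ M ℓ i j)
    (hMne : ∀ ℓ, 1 ≤ ℓ → ℓ ≤ m → M ℓ ≠ 0)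
    (hMsr : ∀ ℓ, 1 ≤ ℓ → ℓ ≤ m → Subrectangular (M ℓ))
    (hT'pos : ∀ ℓ, 1 ≤ ℓ → ℓ ≤ m → ∀ i j, 0 ≤ T' ℓ i j)
    (hTpos : ∀ i j, 0 ≤ T i j)
    (x y : n → ℝ) (hx : ∀ i, 0 ≤ x i) (hy : ∀ i, 0 ≤ y i)
    (hx1 : 0 < ∑ j, |Matrix.vecMul x (prodTM T' M m * T) j|)
    (hy1 : 0 < ∑ j, |Matrix.vecMul y (prodTM T' M m * T) j|) :
    Real.log
        ((∑ j, |Matrix.vecMul x (prodTM T' M m * T) j|) /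
            (∑ j, |Matrix.vecMul y (prodTM T' M m * T) j|) *
          ((∑ j, |Matrix.vecMul y (prodTM T' M m) j|) /
            (∑ j, |Matrix.vecMul x (prodTM T' M m) j|))) ≤
      4 * Real.log ((1 + tau (M 1)) / (1 - tau (M 1))) *
        ∏ ℓ ∈ Finset.Icc 2 m, tau (M ℓ) := by
  have hφ : 0 < phi (M 1) := phi_pos (hMpos 1 le_rfl hm) (hMne 1 le_rfl hm) (hMsr 1 le_rfl hm)
  have hxR := vecMul_prodTM_nonneg hx hT'pos hMpos
  have hyR := vecMul_prodTM_nonneg hy hT'pos hMpos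
  simp only [← vecMul_vecMul, abs_of_nonneg, hxR, hyR, vecMul_nonneg hxR hTpos,
    vecMul_nonneg hyR hTpos] at hx1 hy1 ⊢
  have hratio := (crossRatioLE_vecMul_prodTM hx hy hm hT'pos hMpos hφ).sum_vecMul_div_mul_sum_div_le
    hTpos hxR hx1 hy1
  have hL : 0 ≤ log ((1 + tau (M 1)) / (1 - tau (M 1))) := by
    have := log_nonneg ((one_le_inv₀ hφ).mpr (phi_le_one (M 1)))
    rw [log_inv_phi_eq hφ] at this
    linarith
  have hP : 0 ≤ ∏ ℓ ∈ Finset.Icc 2 m, tau (M ℓ) := Finset.prod_nonneg fun ℓ _ => tau_nonneg _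
  have hxR₁ := sum_pos_of_sum_vecMul_pos hxR hx1
  have hyR₁ := sum_pos_of_sum_vecMul_pos hyR hy1
  calc _ ≤ log ((phi (M 1))⁻¹ ^ ∏ ℓ ∈ Finset.Icc 2 m, tau (M ℓ)) :=
        log_le_log (by positivity) hratio
    _ = 2 * log ((1 + tau (M 1)) / (1 - tau (M 1))) * ∏ ℓ ∈ Finset.Icc 2 m, tau (M ℓ) := by
        rw [log_rpow (inv_pos.mpr hφ), log_inv_phi_eq hφ, mul_comm]
    _ ≤ _ := by nlinarith [mul_nonneg hL hP]

/-- (Contraction inequality, Corollary.) -/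
theorem stmt_12 {n : Type*} [Fintype n] [DecidableEq n]
    (m : ℕ) (hm : 1 ≤ m)
    (M T' : ℕ → Matrix n n ℝ) (T : Matrix n n ℝ)
    (hMpos : ∀ ℓ, 1 ≤ ℓ → ℓ ≤ m → ∀ i j, 0 ≤ M ℓ i j)
    (hMne : ∀ ℓ, 1 ≤ ℓ → ℓ ≤ m → M ℓ ≠ 0)
    (hMsr : ∀ ℓ, 1 ≤ ℓ → ℓ ≤ m → Subrectangular (M ℓ))
    (hT'pos : ∀ ℓ, 1 ≤ ℓ → ℓ ≤ m → ∀ i j, 0 ≤ T' ℓ i j)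
    (hT'ne : ∀ ℓ, 1 ≤ ℓ → ℓ ≤ m → T' ℓ ≠ 0)
    (hTpos : ∀ i j, 0 ≤ T i j) (hTne : T ≠ 0)
    (x y : n → ℝ) (hx : ∀ i, 0 ≤ x i) (hy : ∀ i, 0 ≤ y i)
    (hxne : x ≠ 0) (hyne : y ≠ 0)
    (hx1 : 0 < ∑ j, |Matrix.vecMul x (prodTM T' M m * T) j|)
    (hy1 : 0 < ∑ j, |Matrix.vecMul y (prodTM T' M m * T) j|) :
    Real.log
        ((∑ j, |Matrix.vecMul x (prodTM T' M m * T) j|) /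
            (∑ j, |Matrix.vecMul y (prodTM T' M m * T) j|) *
          ((∑ j, |Matrix.vecMul y (prodTM T' M m) j|) /
            (∑ j, |Matrix.vecMul x (prodTM T' M m) j|))) ≤
      4 * Real.log ((1 + tau (M 1)) / (1 - tau (M 1))) *
        ∏ ℓ ∈ Finset.Icc 2 m, tau (M ℓ) :=
  stmt_12_general m hm M T' T hMpos hMne hMsr hT'pos hTpos x y hx hy hx1 hy1
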